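/- arXiv:1310.7654 — 2 statements merged into one kernel-verified Lean document; each statement's English description precedes it below -/
import Mathlib

section
/- For every ε, α ∈ (0,1) and δ ≥ 0 there exists a constant C = C(ε, α) > 0 such that for every n-player m-action game, the test that outputs YES if the empirical distribution s^k of the k observed action profiles is a (δ + ε/2)-correlated equilibrium and NO otherwise is an ε-test with error probability α for δ-correlated equilibrium whenever k ≥ C·(m·ln m + ln n): for every x ∈ Δ(A), if x is a δ-correlated equilibrium the test outputs YES with probability at least 1 − α, and if x is not a (δ+ε)-correlated equilibrium the test outputs NO with probability at least 1 − α (probabilities over k i.i.d. samples from x). -/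
open Finset

open scoped Classical

noncomputable section

/-- `x` is a probability distribution on the finite type `A`. -/
def IsDist {A : Type*} [Fintype A] (x : A → ℝ) : Prop :=
  (∀ a, 0 ≤ x a) ∧ ∑ a, x a = 1

/-- Empirical distribution of `k` sampled elements of `A`. -/
def empJoint {A : Type*} [Fintype A] [DecidableEq A] (k : ℕ) (a : Fin k → A) : A → ℝ :=
  fun p => ((univ.filter fun t => a t = p).card : ℝ) / k

/-- Probability of the event `E` over `k` i.i.d. samples from the distribution `x`. -/
def PrJoint {A : Type*} [Fintype A] (k : ℕ) (x : A → ℝ) (E : (Fin k → A) → Prop) : ℝ :=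
  ∑ a : Fin k → A, if E a then ∏ t, x (a t) else 0

/-- `x ∈ Δ(A)` is an `ε`-coarse correlated equilibrium of the game `u`:
for every player `i` and action `j`, the expected regret for not playing `j`
is at most `ε`. -/
def IsCCE {n m : ℕ} (u : Fin n → (Fin n → Fin m) → ℝ)
    (x : (Fin n → Fin m) → ℝ) (ε : ℝ) : Prop :=
  ∀ (i : Fin n) (j : Fin m),
    ∑ a : Fin n → Fin m, x a * (u i (Function.update a i j) - u i a) ≤ ε

/-- `x ∈ Δ(A)` is an `ε`-correlated equilibrium of the game `u`:
for every player `i` and deviation map `f : [m] → [m]`, the expected regret is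
at most `ε`. -/
def IsCE {n m : ℕ} (u : Fin n → (Fin n → Fin m) → ℝ)
    (x : (Fin n → Fin m) → ℝ) (ε : ℝ) : Prop :=
  ∀ (i : Fin n) (f : Fin m → Fin m),
    ∑ a : Fin n → Fin m, x a * (u i (Function.update a i (f (a i))) - u i a) ≤ ε

/-- A distribution on a finite set is `k`-uniform if every probability is an integer
multiple of `1/k` (equivalently, it is uniform over a size-`k` multiset). -/
def IsKUniform {A : Type*} [Fintype A] (k : ℕ) (x : A → ℝ) : Prop :=
  ∀ a, ∃ c : ℕ, x a = (c : ℝ) / k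

/-!
For a player `i` and a deviation map `f`, the regret of `f` is a function of the action profile
with values in `[-1, 1]`. A Chernoff bound, via `E exp (λ (g - E g)) ≤ exp (4 λ²)` for `|g| ≤ 1`
and `0 ≤ λ ≤ 1/2`, shows that its empirical mean over `k` samples exceeds its mean by `ε/2` with
probability at most `exp (-k ε² / 64)`; applied to `-g`, the same holds for falling short.
If `x` is a `δ`-correlated equilibrium, a union bound over the `n m^m` pairs `(i, f)` bounds the
failure probability by `n m^m exp (-k ε² / 64)`, which is at most `α` once
`k ε² / 64 ≥ (1 + log α⁻¹) log (n m^m)`, since `log (n m^m) = m log m + log n ≥ 1` for `m ≥ 2`.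
If `x` is not a `(δ + ε)`-correlated equilibrium, a single violated pair suffices. For `m = 1`
every distribution is an exact correlated equilibrium.
-/

section Sampling

variable {A : Type*} [Fintype A] {k : ℕ} {x : A → ℝ}

theorem prJoint_of_forall (hx : IsDist x) {E : (Fin k → A) → Prop} (hE : ∀ a, E a) :
    PrJoint k x E = 1 := by
  simp [PrJoint, hE, ← Fintype.sum_pow, hx.2]

theorem prJoint_mono (hx : ∀ a, 0 ≤ x a) {E F : (Fin k → A) → Prop} (h : ∀ a, E a → F a) :
    PrJoint k x E ≤ PrJoint k x F := by
  refine sum_le_sum fun a _ => ?_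
  split_ifs with hE hF
  · exact le_rfl
  · exact absurd (h a hE) hF
  · exact prod_nonneg fun t _ => hx _
  · exact le_rfl

theorem prJoint_add_prJoint_not (hx : IsDist x) (E : (Fin k → A) → Prop) :
    PrJoint k x E + PrJoint k x (fun a => ¬ E a) = 1 := by
  calc PrJoint k x E + PrJoint k x (fun a => ¬ E a) = ∑ a : Fin k → A, ∏ t, x (a t) := by
        rw [PrJoint, PrJoint, ← sum_add_distrib]
        exact sum_congr rfl fun a _ => by by_cases hE : E a <;> simp [hE]
    _ = 1 := by rw [← Fintype.sum_pow, hx.2, one_pow]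

theorem prJoint_exists_le_sum (hx : ∀ a, 0 ≤ x a) {ι : Type*} (s : Finset ι)
    (E : ι → (Fin k → A) → Prop) :
    PrJoint k x (fun a => ∃ i ∈ s, E i a) ≤ ∑ i ∈ s, PrJoint k x (E i) := by
  simp only [PrJoint]
  rw [sum_comm]
  refine sum_le_sum fun a _ => ?_
  have hnonneg : ∀ i ∈ s, 0 ≤ if E i a then ∏ t, x (a t) else 0 := fun i _ => by
    split_ifs
    exacts [prod_nonneg fun t _ => hx _, le_rfl]
  split_ifs with h
  · obtain ⟨i, hi, hEi⟩ := h
    simpa [hEi] using single_le_sum hnonneg hi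
  · exact sum_nonneg hnonneg

theorem prJoint_le_sum_pow {F : A → ℝ} (hF : ∀ y, 0 ≤ F y) {E : (Fin k → A) → Prop}
    (hE : ∀ a, E a → ∏ t, x (a t) ≤ ∏ t, F (a t)) : PrJoint k x E ≤ (∑ y, F y) ^ k := by
  rw [Fintype.sum_pow]
  refine sum_le_sum fun a _ => ?_
  split_ifs with h
  · exact hE a h
  · exact prod_nonneg fun t _ => hF _

theorem sum_mul_exp_sub_le (hx : IsDist x) {g : A → ℝ} (hg : ∀ y, |g y| ≤ 1) {l : ℝ}
    (hl0 : 0 ≤ l) (hl : l ≤ 1 / 2) :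
    ∑ y, x y * Real.exp (l * (g y - ∑ z, x z * g z)) ≤ Real.exp (4 * l ^ 2) := by
  set μ := ∑ z, x z * g z
  have hμ : |μ| ≤ 1 :=
    calc |μ| ≤ ∑ z, |x z * g z| := abs_sum_le_sum_abs _ _
      _ ≤ ∑ z, x z := sum_le_sum fun z _ => by
          rw [abs_mul, abs_of_nonneg (hx.1 z)]
          exact mul_le_of_le_one_right (hx.1 z) (hg z)
      _ = 1 := hx.2
  have hexp : ∀ y, Real.exp (l * (g y - μ)) ≤ 1 + l * (g y - μ) + 4 * l ^ 2 := fun y => by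
    have hdev : |g y - μ| ≤ 2 := (abs_sub _ _).trans (by linarith [hg y])
    have hsq : (l * (g y - μ)) ^ 2 ≤ 4 * l ^ 2 := by
      calc (l * (g y - μ)) ^ 2 = l ^ 2 * |g y - μ| ^ 2 := by rw [mul_pow, sq_abs]
        _ ≤ l ^ 2 * 2 ^ 2 := by gcongr
        _ = 4 * l ^ 2 := by ring
    have hz : |l * (g y - μ)| ≤ 1 := by
      rw [abs_mul, abs_of_nonneg hl0]
      nlinarith [abs_nonneg (g y - μ)]
    linarith [le_abs_self (Real.exp (l * (g y - μ)) - 1 - l * (g y - μ)),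
      Real.abs_exp_sub_one_sub_id_le hz]
  calc ∑ y, x y * Real.exp (l * (g y - μ))
      ≤ ∑ y, x y * (1 + l * (g y - μ) + 4 * l ^ 2) :=
        sum_le_sum fun y _ => mul_le_mul_of_nonneg_left (hexp y) (hx.1 y)
    _ = ∑ y, ((1 + 4 * l ^ 2 - l * μ) * x y + l * (x y * g y)) :=
        sum_congr rfl fun y _ => by ring
    _ = 1 + 4 * l ^ 2 := by
        rw [sum_add_distrib, ← mul_sum, ← mul_sum, hx.2]
        change (1 + 4 * l ^ 2 - l * μ) * 1 + l * μ = _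
        ring
    _ ≤ Real.exp (4 * l ^ 2) := by linarith [Real.add_one_le_exp (4 * l ^ 2)]

theorem prJoint_le_exp_of_le_sum (hx : IsDist x) {g : A → ℝ} (hg : ∀ y, |g y| ≤ 1) {l : ℝ}
    (hl0 : 0 ≤ l) (hl : l ≤ 1 / 2) (t : ℝ) :
    PrJoint k x (fun a => k * (∑ y, x y * g y + t) ≤ ∑ s, g (a s)) ≤
      Real.exp (k * (4 * l ^ 2 - l * t)) := by
  set μ := ∑ y, x y * g y
  set F : A → ℝ := fun y => x y * Real.exp (l * (g y - μ - t))
  have hmarkov : ∀ a : Fin k → A, k * (μ + t) ≤ ∑ s, g (a s) →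
      ∏ s, x (a s) ≤ ∏ s, F (a s) := fun a ha => by
    have hprod : ∏ s, F (a s) = (∏ s, x (a s)) * Real.exp (l * (∑ s, g (a s) - k * (μ + t))) := by
      simp only [F, prod_mul_distrib, ← Real.exp_sum, ← mul_sum, sum_sub_distrib, sum_const,
        card_univ, Fintype.card_fin, nsmul_eq_mul]
      ring_nf
    rw [hprod]
    exact le_mul_of_one_le_right (prod_nonneg fun s _ => hx.1 _)
      (Real.one_le_exp (mul_nonneg hl0 (sub_nonneg.2 ha)))
  calc PrJoint k x _ ≤ (∑ y, F y) ^ k :=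
        prJoint_le_sum_pow (fun y => mul_nonneg (hx.1 y) (Real.exp_pos _).le) hmarkov
    _ = (Real.exp (-(l * t)) * ∑ y, x y * Real.exp (l * (g y - μ))) ^ k := by
        simp only [F, mul_sum]
        congr 1
        refine sum_congr rfl fun y _ => ?_
        rw [mul_left_comm, ← Real.exp_add]
        ring_nf
    _ ≤ (Real.exp (-(l * t)) * Real.exp (4 * l ^ 2)) ^ k := by
        have hnonneg : 0 ≤ ∑ y, x y * Real.exp (l * (g y - μ)) :=
          sum_nonneg fun y _ => mul_nonneg (hx.1 y) (Real.exp_pos _).le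
        gcongr
        exact sum_mul_exp_sub_le hx hg hl0 hl
    _ = Real.exp (k * (4 * l ^ 2 - l * t)) := by
        rw [← Real.exp_add, ← Real.exp_nat_mul]
        ring_nf

theorem sum_empJoint_mul [DecidableEq A] (a : Fin k → A) (g : A → ℝ) :
    ∑ y, empJoint k a y * g y = (∑ s, g (a s)) / k := by
  rw [← sum_fiberwise univ a (fun s => g (a s)), sum_div]
  refine sum_congr rfl fun y _ => ?_
  rw [sum_congr rfl fun s hs => by rw [(mem_filter.1 hs).2], sum_const, nsmul_eq_mul, empJoint]
  ring

theorem prJoint_add_le_sum_empJoint_mul [DecidableEq A] (hx : IsDist x) (hk : 0 < k)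
    {g : A → ℝ} (hg : ∀ y, |g y| ≤ 1) {t : ℝ} (ht0 : 0 ≤ t) (ht : t ≤ 4) :
    PrJoint k x (fun a => ∑ y, x y * g y + t ≤ ∑ y, empJoint k a y * g y) ≤
      Real.exp (-(k * t ^ 2 / 16)) := by
  have hk' : (0 : ℝ) < k := by exact_mod_cast hk
  calc _ ≤ PrJoint k x (fun a => k * (∑ y, x y * g y + t) ≤ ∑ s, g (a s)) :=
        prJoint_mono hx.1 fun a ha => by rwa [sum_empJoint_mul, le_div_iff₀' hk'] at ha
    _ ≤ Real.exp (k * (4 * (t / 8) ^ 2 - t / 8 * t)) :=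
        prJoint_le_exp_of_le_sum hx hg (by positivity) (by linarith) t
    _ = Real.exp (-(k * t ^ 2 / 16)) := by ring_nf

end Sampling

section Game

variable {n m : ℕ}

def regret (u : Fin n → (Fin n → Fin m) → ℝ) (i : Fin n) (f : Fin m → Fin m)
    (a : Fin n → Fin m) : ℝ :=
  u i (Function.update a i (f (a i))) - u i a

variable {u : Fin n → (Fin n → Fin m) → ℝ}

theorem isCE_iff {x : (Fin n → Fin m) → ℝ} {ε : ℝ} :
    IsCE u x ε ↔ ∀ i f, ∑ a, x a * regret u i f a ≤ ε :=
  Iff.rfl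

theorem abs_regret_le_one (hu : ∀ i a, 0 ≤ u i a ∧ u i a ≤ 1) (i : Fin n) (f : Fin m → Fin m)
    (a : Fin n → Fin m) : |regret u i f a| ≤ 1 := by
  have h₁ := hu i (Function.update a i (f (a i)))
  have h₂ := hu i a
  rw [regret, abs_le]
  constructor <;> linarith

theorem isCE_of_le_one (hm : m ≤ 1) (x : (Fin n → Fin m) → ℝ) {ε : ℝ} (hε : 0 ≤ ε) :
    IsCE u x ε := by
  have : Subsingleton (Fin m) := Fin.subsingleton_iff_le_one.2 hm
  intro i f
  have hf : ∀ a : Fin n → Fin m, Function.update a i (f (a i)) = a := fun a => by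
    rw [Subsingleton.elim (f (a i)) (a i), Function.update_eq_self]
  simpa only [hf, sub_self, mul_zero, sum_const_zero] using hε

variable {x : (Fin n → Fin m) → ℝ} {k : ℕ} {δ ε : ℝ}

theorem one_sub_le_prJoint_isCE_empJoint (hx : IsDist x) (hu : ∀ i a, 0 ≤ u i a ∧ u i a ≤ 1)
    (hCE : IsCE u x δ) (hk : 0 < k) (hε0 : 0 ≤ ε) (hε : ε ≤ 8) :
    1 - n * m ^ m * Real.exp (-(k * ε ^ 2 / 64)) ≤
      PrJoint k x (fun a => IsCE u (empJoint k a) (δ + ε / 2)) := by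
  have hfail : PrJoint k x (fun a => ¬ IsCE u (empJoint k a) (δ + ε / 2)) ≤
      n * m ^ m * Real.exp (-(k * ε ^ 2 / 64)) :=
    calc _ ≤ PrJoint k x (fun a => ∃ p ∈ (univ : Finset (Fin n × (Fin m → Fin m))),
          ∑ y, x y * regret u p.1 p.2 y + ε / 2 ≤ ∑ y, empJoint k a y * regret u p.1 p.2 y) :=
          prJoint_mono hx.1 fun a ha => by
            simp only [isCE_iff, not_forall, not_le] at ha
            obtain ⟨i, f, hif⟩ := ha
            exact ⟨(i, f), mem_univ _, by linarith [isCE_iff.1 hCE i f]⟩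
      _ ≤ ∑ _p : Fin n × (Fin m → Fin m), Real.exp (-(k * ε ^ 2 / 64)) :=
          (prJoint_exists_le_sum hx.1 _ _).trans <| sum_le_sum fun p _ =>
            (prJoint_add_le_sum_empJoint_mul hx hk (abs_regret_le_one hu p.1 p.2)
              (by positivity) (by linarith)).trans_eq (by ring_nf)
      _ = n * m ^ m * Real.exp (-(k * ε ^ 2 / 64)) := by simp
  linarith [prJoint_add_prJoint_not hx (fun a => IsCE u (empJoint k a) (δ + ε / 2))]

theorem one_sub_le_prJoint_not_isCE_empJoint (hx : IsDist x)
    (hu : ∀ i a, 0 ≤ u i a ∧ u i a ≤ 1) (hCE : ¬ IsCE u x (δ + ε)) (hk : 0 < k)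
    (hε0 : 0 ≤ ε) (hε : ε ≤ 8) :
    1 - Real.exp (-(k * ε ^ 2 / 64)) ≤
      PrJoint k x (fun a => ¬ IsCE u (empJoint k a) (δ + ε / 2)) := by
  simp only [isCE_iff, not_forall, not_le] at hCE
  obtain ⟨i, f, hif⟩ := hCE
  have hpass : PrJoint k x (fun a => IsCE u (empJoint k a) (δ + ε / 2)) ≤
      Real.exp (-(k * ε ^ 2 / 64)) :=
    calc _ ≤ PrJoint k x (fun a =>
          ∑ y, x y * -regret u i f y + ε / 2 ≤ ∑ y, empJoint k a y * -regret u i f y) :=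
          prJoint_mono hx.1 fun a ha => by
            simp only [mul_neg, sum_neg_distrib]
            linarith [isCE_iff.1 ha i f]
      _ ≤ _ := (prJoint_add_le_sum_empJoint_mul hx hk
          (fun y => (abs_neg (regret u i f y)).trans_le (abs_regret_le_one hu i f y))
          (by positivity) (by linarith)).trans_eq (by ring_nf)
  linarith [prJoint_add_prJoint_not hx (fun a => IsCE u (empJoint k a) (δ + ε / 2))]

end Game

theorem mul_exp_neg_le {N α s : ℝ} (hN : 0 < N) (hlogN : 1 ≤ Real.log N) (hα0 : 0 < α)
    (hα1 : α ≤ 1) (hs : (1 + Real.log α⁻¹) * Real.log N ≤ s) : N * Real.exp (-s) ≤ α := by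
  have hL : 0 ≤ Real.log α⁻¹ := Real.log_nonneg ((one_le_inv₀ hα0).2 hα1)
  calc N * Real.exp (-s) = Real.exp (Real.log N - s) := by
        rw [Real.exp_sub, Real.exp_log hN, Real.exp_neg, div_eq_mul_inv]
    _ ≤ Real.exp (-Real.log α⁻¹) :=
        Real.exp_le_exp.2 (by nlinarith [mul_le_mul_of_nonneg_left hlogN hL])
    _ = α := by rw [Real.log_inv, neg_neg, Real.exp_log hα0]

theorem one_le_log_mul_pow_self {n m : ℕ} (hn : 0 < n) (hm : 2 ≤ m) :
    1 ≤ Real.log (n * m ^ m) := by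
  have hm' : (2 : ℝ) ≤ m := by exact_mod_cast hm
  have hpow : (2 : ℝ) ^ 2 ≤ n * m ^ m :=
    calc (2 : ℝ) ^ 2 ≤ (m : ℝ) ^ 2 := pow_le_pow_left₀ (by norm_num) hm' 2
      _ ≤ (m : ℝ) ^ m := pow_le_pow_right₀ (by linarith) hm
      _ ≤ n * m ^ m := le_mul_of_one_le_left (by positivity) (by exact_mod_cast hn)
  calc 1 ≤ 2 * Real.log 2 := by linarith [Real.log_two_gt_d9]
    _ = Real.log (2 ^ 2) := by rw [Real.log_pow]; norm_num
    _ ≤ Real.log (n * m ^ m) := Real.log_le_log (by norm_num) hpow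

theorem natCast_mul_pow_self_mul_exp_le {n m k : ℕ} {ε α : ℝ} (hn : 0 < n) (hm : 2 ≤ m)
    (hε : 0 < ε) (hα0 : 0 < α) (hα1 : α ≤ 1)
    (hk : (k : ℝ) ≥ 64 / ε ^ 2 * (1 + Real.log α⁻¹) * (m * Real.log m + Real.log n)) :
    (n * m ^ m : ℝ) * Real.exp (-(k * ε ^ 2 / 64)) ≤ α := by
  have hlog : Real.log (n * m ^ m) = m * Real.log m + Real.log n := by
    rw [Real.log_mul (by positivity) (by positivity), Real.log_pow, add_comm]
  refine mul_exp_neg_le (by positivity) (one_le_log_mul_pow_self hn hm) hα0 hα1 ?_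
  calc (1 + Real.log α⁻¹) * Real.log (n * m ^ m)
      = 64 / ε ^ 2 * (1 + Real.log α⁻¹) * (m * Real.log m + Real.log n) * (ε ^ 2 / 64) := by
        rw [hlog]; field_simp
    _ ≤ k * ε ^ 2 / 64 := by
        have hL : 0 ≤ Real.log α⁻¹ := Real.log_nonneg ((one_le_inv₀ hα0).2 hα1)
        rw [mul_div_assoc]; gcongr

/-- For every `ε, α ∈ (0,1)` there is a constant `C = C(ε,α) > 0` such
that for every `δ ≥ 0` and every `n`-player `m`-action game, the test that outputs YES
iff the empirical distribution of the `k` observed action profiles is a `(δ + ε/2)`-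
correlated equilibrium is an `ε`-test with error probability `α` for `δ`-correlated
equilibrium whenever `k ≥ C(m ln m + ln n)`: if `x` is a `δ`-correlated equilibrium the
test answers YES with probability ≥ `1 − α`; if `x` is not a `(δ+ε)`-correlated
equilibrium it answers NO with probability ≥ `1 − α`. -/
theorem stmt10 (ε α : ℝ) (hε : 0 < ε ∧ ε < 1) (hα : 0 < α ∧ α < 1) :
    ∃ C > (0 : ℝ), ∀ δ : ℝ, 0 ≤ δ → ∀ (n m : ℕ), 0 < n → 0 < m →
      ∀ u : Fin n → (Fin n → Fin m) → ℝ, (∀ i a, 0 ≤ u i a ∧ u i a ≤ 1) →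
      ∀ k : ℕ, (k : ℝ) ≥ C * ((m : ℝ) * Real.log m + Real.log n) →
        (∀ x : (Fin n → Fin m) → ℝ, IsDist x → IsCE u x δ →
          PrJoint k x (fun a => IsCE u (empJoint k a) (δ + ε / 2)) ≥ 1 - α) ∧
        (∀ x : (Fin n → Fin m) → ℝ, IsDist x → ¬ IsCE u x (δ + ε) →
          PrJoint k x (fun a => ¬ IsCE u (empJoint k a) (δ + ε / 2)) ≥ 1 - α) := by
  obtain ⟨hε0, hε1⟩ := hε
  obtain ⟨hα0, hα1⟩ := hα
  have hL : 0 < Real.log α⁻¹ := Real.log_pos ((one_lt_inv₀ hα0).2 hα1)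
  refine ⟨64 / ε ^ 2 * (1 + Real.log α⁻¹), by positivity, fun δ hδ n m hn hm u hu k hk => ?_⟩
  obtain rfl | hm2 : m = 1 ∨ 2 ≤ m := by omega
  · have hCE : ∀ x η, 0 ≤ η → IsCE u x η := fun x _ hη => isCE_of_le_one le_rfl x hη
    refine ⟨fun x hx _ => ?_, fun x _ h => absurd (hCE x _ (by linarith)) h⟩
    rw [prJoint_of_forall hx fun a => hCE _ _ (by linarith)]
    linarith
  have hfail := natCast_mul_pow_self_mul_exp_le hn hm2 hε0 hα0 hα1.le hk
  have hN : (1 : ℝ) ≤ n * m ^ m :=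
    one_le_mul_of_one_le_of_one_le (by exact_mod_cast hn) (one_le_pow₀ (by exact_mod_cast hm))
  have hk0 : 0 < k := Nat.pos_of_ne_zero fun h => by
    subst h
    simp only [CharP.cast_eq_zero, zero_mul, zero_div, neg_zero, Real.exp_zero, mul_one] at hfail
    linarith
  refine ⟨fun x hx hCE => ?_, fun x hx hCE => ?_⟩
  · linarith [one_sub_le_prJoint_isCE_empJoint hx hu hCE hk0 hε0.le (by linarith)]
  · linarith [one_sub_le_prJoint_not_isCE_empJoint hx hu hCE hk0 hε0.le (by linarith),
      le_mul_of_one_le_left (Real.exp_pos (-(k * ε ^ 2 / 64))).le hN]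
end
end

section
/- Let x = (x_i)_{i∈[n]} and s = (s_i)_{i∈[n]} be product distributions over actions in an n-player m-action game, let ε > 0 and δ ≥ 0, and suppose that |u_i(a_i, s_{-i}) − u_i(a_i, x_{-i})| ≤ ε/6 for every player i and every action a_i ∈ [m], and that |u_i(s_i, x_{-i}) − u_i(x_i, x_{-i})| ≤ ε/6 for every player i. If x is a δ-Nash equilibrium, then s is a (δ + ε/2)-Nash equilibrium. -/
open Finset

open scoped Classical

noncomputable section

/-- Probability of the pure action profile `a` under the product distribution `x`. -/
def prodProb {n m : ℕ} (x : Fin n → Fin m → ℝ) (a : Fin n → Fin m) : ℝ :=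
  ∏ i, x i (a i)

/-- Expected utility of the payoff function `u` under the product distribution `x`. -/
def EU {n m : ℕ} (u : (Fin n → Fin m) → ℝ) (x : Fin n → Fin m → ℝ) : ℝ :=
  ∑ a, prodProb x a * u a

/-- The point mass (pure strategy) at action `b`. -/
def pureStrat {m : ℕ} (b : Fin m) : Fin m → ℝ := fun c => if c = b then 1 else 0

/-- `x` is an `ε`-Nash equilibrium of the game `u`: no player gains more than `ε`
by deviating to any pure action. -/
def IsNash {n m : ℕ} (u : Fin n → (Fin n → Fin m) → ℝ) (x : Fin n → Fin m → ℝ)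
    (ε : ℝ) : Prop :=
  ∀ (i : Fin n) (b : Fin m),
    EU (u i) x ≥ EU (u i) (Function.update x i (pureStrat b)) - ε

/-- Empirical distribution of player `i` given `k` sampled action profiles. -/
def emp {n m : ℕ} (k : ℕ) (a : Fin k → Fin n → Fin m) (i : Fin n) : Fin m → ℝ :=
  fun b => ((univ.filter fun t => a t i = b).card : ℝ) / k

/-- Probability of the event `E` over `k` i.i.d. samples from the product distribution `x`. -/
def PrProd {n m : ℕ} (k : ℕ) (x : Fin n → Fin m → ℝ)
    (E : (Fin k → Fin n → Fin m) → Prop) : ℝ :=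
  ∑ a : Fin k → Fin n → Fin m, if E a then ∏ t, prodProb x (a t) else 0

lemma prodProb_update {n m : ℕ} (y : Fin n → Fin m → ℝ) (i : Fin n)
    (v : Fin m → ℝ) (a : Fin n → Fin m) :
    prodProb (Function.update y i v) a = v (a i) * ∏ j ∈ univ.erase i, y j (a j) := by
  unfold prodProb
  rw [← Finset.mul_prod_erase univ _ (mem_univ i)]
  congr 1
  · simp
  · exact Finset.prod_congr rfl fun j hj => by
      rw [Function.update_of_ne (mem_erase.mp hj).1]

lemma EU_update {n m : ℕ} (u : (Fin n → Fin m) → ℝ) (y : Fin n → Fin m → ℝ)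
    (i : Fin n) (w : Fin m → ℝ) :
    EU u (Function.update y i w) = ∑ b, w b * EU u (Function.update y i (pureStrat b)) := by
  unfold EU
  simp only [prodProb_update, Finset.mul_sum]
  rw [Finset.sum_comm]
  refine Finset.sum_congr rfl fun a _ => ?_
  have key : ∀ b : Fin m,
      w b * (pureStrat b (a i) * (∏ j ∈ univ.erase i, y j (a j)) * u a)
      = if a i = b then w b * ((∏ j ∈ univ.erase i, y j (a j)) * u a) else 0 := by
    intro b
    simp only [pureStrat]
    split <;> simp_all
  simp only [key, Finset.sum_ite_eq, mem_univ, if_true]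
  ring

/-- If `x` and `s` are product distributions with
`|uᵢ(aᵢ, s₋ᵢ) − uᵢ(aᵢ, x₋ᵢ)| ≤ ε/6` for all players `i` and actions `aᵢ`, and
`|uᵢ(sᵢ, x₋ᵢ) − uᵢ(xᵢ, x₋ᵢ)| ≤ ε/6` for all `i`, and `x` is a `δ`-Nash equilibrium,
then `s` is a `(δ + ε/2)`-Nash equilibrium. -/
theorem stmt12 {n m : ℕ} (hn : 0 < n) (hm : 0 < m)
    (u : Fin n → (Fin n → Fin m) → ℝ)
    (hu : ∀ i a, 0 ≤ u i a ∧ u i a ≤ 1)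
    (x s : Fin n → Fin m → ℝ) (hx : ∀ i, IsDist (x i)) (hs : ∀ i, IsDist (s i))
    (ε δ : ℝ) (hε : 0 < ε) (hδ : 0 ≤ δ)
    (h1 : ∀ (i : Fin n) (b : Fin m),
      |EU (u i) (Function.update s i (pureStrat b)) -
        EU (u i) (Function.update x i (pureStrat b))| ≤ ε / 6)
    (h2 : ∀ i : Fin n,
      |EU (u i) (Function.update x i (s i)) - EU (u i) x| ≤ ε / 6)
    (hNash : IsNash u x δ) :
    IsNash u s (δ + ε / 2) := by
  intro i b
  have hsi := hs i
  have hss : Function.update s i (s i) = s := Function.update_eq_self i s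
  have habs : |EU (u i) (Function.update s i (s i)) -
      EU (u i) (Function.update x i (s i))| ≤ ε / 6 := by
    rw [EU_update, EU_update, ← Finset.sum_sub_distrib]
    calc |∑ c, (s i c * EU (u i) (Function.update s i (pureStrat c))
            - s i c * EU (u i) (Function.update x i (pureStrat c)))|
        ≤ ∑ c, |s i c * EU (u i) (Function.update s i (pureStrat c))
            - s i c * EU (u i) (Function.update x i (pureStrat c))| :=
          Finset.abs_sum_le_sum_abs _ _
      _ ≤ ∑ c : Fin m, s i c * (ε / 6) := by
          refine Finset.sum_le_sum fun c _ => ?_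
          rw [← mul_sub, abs_mul, abs_of_nonneg (hsi.1 c)]
          exact mul_le_mul_of_nonneg_left (h1 i c) (hsi.1 c)
      _ = ε / 6 := by rw [← Finset.sum_mul, hsi.2, one_mul]
  rw [hss] at habs
  have hn' := hNash i b
  have h2i := h2 i
  have h1i := h1 i b
  rw [abs_le] at habs h2i h1i
  linarith [habs.1, habs.2, h2i.1, h2i.2, h1i.1, h1i.2]
end
end
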